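/- In any real normed space, for any two linearly independent vectors x, y, the map Θ(t) := ∠Thy(x, y + t·x) is a strictly decreasing homeomorphism from ℝ onto the open interval (0, π). -/

import Mathlib

open Real Filter Set Topology NormedSpace

/-!
Fix a unit vector `u` and `b = a + d • u` with `d ≥ 0`; write `v̂ = normalize v`, `α = ‖a‖`,
`β = ‖b‖`. The triangle inequality applied to `(d + β) • (u + â) = (d + β - α) • â + β • (u + b̂)`
and to `(d + β) • b̂ = a + d • (u + b̂)` gives `‖u + â‖ ≤ ‖u + b̂‖`, and replacing `u` by `-u` gives
`‖u - b̂‖ ≤ ‖u - â‖`. If both were equalities, then `p = ‖u + â‖` and `q = ‖u - â‖` would satisfy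
`d p = d + β - α` and `d q = d + α - β`, so `p + q = 2`. A norming functional `g` of `u` then has
`g â = g b̂ = p - 1`, and `g b - g a = d` gives `(β - α)² = d²`, i.e. `p q = 0`: `a` is parallel
to `u`. So `t ↦ thyCos x (y + t • x)` is strictly increasing; it is continuous with limits `∓1`
at `∓∞`, hence a bijection onto `(-1, 1)`, which `arccos` maps decreasingly onto `(0, π)`.
-/

section ThyCos

variable {X : Type*} [NormedAddCommGroup X] [NormedSpace ℝ X]

/-- `∠Thy(u, v) = arccos (thyCos u v)`. -/
noncomputable def thyCos (u v : X) : ℝ :=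
  1 / 4 * (‖normalize u + normalize v‖ ^ 2 - ‖normalize u - normalize v‖ ^ 2)

section UnitDirection

variable {u a : X} {d : ℝ}

lemma norm_add_normalize_le_of_add_smul (hu : ‖u‖ = 1) (hd : 0 ≤ d) (ha : a ≠ 0) :
    (d + ‖a + d • u‖) * ‖u + normalize a‖ ≤
      d + ‖a + d • u‖ - ‖a‖ + ‖a + d • u‖ * ‖u + normalize (a + d • u)‖ := by
  set α := ‖a‖
  set β := ‖a + d • u‖
  have hslack : 0 ≤ d + β - α := by
    have := norm_sub_le (a + d • u) (d • u)
    rw [add_sub_cancel_right, norm_smul, norm_of_nonneg hd, hu, mul_one] at this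
    linarith
  have hb : β • normalize (a + d • u) = α • normalize a + d • u := by
    rw [norm_smul_normalize, norm_smul_normalize]
  have key : (d + β) • (u + normalize a) =
      (d + β - α) • normalize a + β • (u + normalize (a + d • u)) := by
    rw [smul_add β, hb]; module
  have := norm_add_le ((d + β - α) • normalize a) (β • (u + normalize (a + d • u)))
  rwa [← key, norm_smul, norm_smul, norm_smul, norm_normalize ha, norm_of_nonneg hslack,
    norm_of_nonneg (norm_nonneg _), norm_of_nonneg (by positivity), mul_one] at this

lemma le_mul_norm_add_normalize_add_smul (hd : 0 ≤ d) (hb : a + d • u ≠ 0) :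
    d + ‖a + d • u‖ - ‖a‖ ≤ d * ‖u + normalize (a + d • u)‖ := by
  have key : (d + ‖a + d • u‖) • normalize (a + d • u) = a + d • (u + normalize (a + d • u)) := by
    rw [add_smul, norm_smul_normalize]; module
  have := norm_add_le a (d • (u + normalize (a + d • u)))
  rw [← key, norm_smul, norm_smul, norm_normalize hb, norm_of_nonneg hd,
    norm_of_nonneg (by positivity)] at this
  linarith

lemma norm_add_normalize_le_norm_add_normalize_add_smul (hu : ‖u‖ = 1) (hd : 0 ≤ d)
    (ha : a ≠ 0) (hb : a + d • u ≠ 0) :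
    ‖u + normalize a‖ ≤ ‖u + normalize (a + d • u)‖ := by
  have hβ : 0 < ‖a + d • u‖ := norm_pos_iff.2 hb
  refine le_of_mul_le_mul_left ?_ (by positivity : 0 < d + ‖a + d • u‖)
  linarith [norm_add_normalize_le_of_add_smul hu hd ha, le_mul_norm_add_normalize_add_smul hd hb]

lemma norm_sub_normalize_add_smul_le_norm_sub_normalize (hu : ‖u‖ = 1) (hd : 0 ≤ d)
    (ha : a ≠ 0) (hb : a + d • u ≠ 0) :
    ‖u - normalize (a + d • u)‖ ≤ ‖u - normalize a‖ := by
  have hba : a + d • u + d • -u = a := by module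
  have h := norm_add_normalize_le_norm_add_normalize_add_smul (norm_neg u ▸ hu) hd hb (by rwa [hba])
  rwa [hba, neg_add_eq_sub, neg_add_eq_sub, norm_sub_rev, norm_sub_rev _ u] at h

lemma mul_norm_add_normalize_add_smul_eq (hu : ‖u‖ = 1) (hd : 0 ≤ d) (ha : a ≠ 0)
    (hb : a + d • u ≠ 0) (hle : ‖u + normalize (a + d • u)‖ ≤ ‖u + normalize a‖) :
    d * ‖u + normalize (a + d • u)‖ = d + ‖a + d • u‖ - ‖a‖ := by
  have h₁ := norm_add_normalize_le_of_add_smul hu hd ha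
  have h₂ := le_mul_norm_add_normalize_add_smul hd hb
  have := mul_le_mul_of_nonneg_left hle (by positivity : 0 ≤ d + ‖a + d • u‖)
  linarith

lemma mul_norm_sub_normalize_eq (hu : ‖u‖ = 1) (hd : 0 ≤ d) (ha : a ≠ 0)
    (hb : a + d • u ≠ 0) (hle : ‖u - normalize a‖ ≤ ‖u - normalize (a + d • u)‖) :
    d * ‖u - normalize a‖ = d + ‖a‖ - ‖a + d • u‖ := by
  have hba : a + d • u + d • -u = a := by module
  have h := mul_norm_add_normalize_add_smul_eq (norm_neg u ▸ hu) hd hb (by rwa [hba])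
  rw [hba, neg_add_eq_sub, neg_add_eq_sub, norm_sub_rev, norm_sub_rev _ u] at h
  exact h hle

lemma dual_apply_eq_norm_add_sub_one {g : StrongDual ℝ X} (hg : ‖g‖ ≤ 1) (hgu : g u = 1)
    {v : X} (h : ‖u + v‖ + ‖u - v‖ ≤ 2) : g v = ‖u + v‖ - 1 := by
  have hle : ∀ z, g z ≤ ‖z‖ := fun z =>
    (le_abs_self _).trans <| (g.le_of_opNorm_le hg z).trans_eq (one_mul _)
  have h₁ := hle (u + v)
  have h₂ := hle (u - v)
  rw [map_add, hgu] at h₁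
  rw [map_sub, hgu] at h₂
  linarith

lemma dual_apply_eq_norm_mul_dual_apply_normalize (g : StrongDual ℝ X) (v : X) :
    g v = ‖v‖ * g (normalize v) := by
  conv_lhs => rw [← norm_smul_normalize v]
  rw [map_smul, smul_eq_mul]

lemma exists_eq_smul_of_norm_add_normalize_mul_norm_sub_normalize_eq_zero
    (h : ‖u + normalize a‖ * ‖u - normalize a‖ = 0) : ∃ c : ℝ, a = c • u := by
  have ha : a = ‖a‖ • normalize a := (norm_smul_normalize a).symm
  rcases mul_eq_zero.1 h with h | h
  · refine ⟨-‖a‖, ?_⟩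
    rw [neg_smul, ← smul_neg, ← eq_neg_of_add_eq_zero_right (norm_eq_zero.1 h), ← ha]
  · refine ⟨‖a‖, ?_⟩
    rw [sub_eq_zero.1 (norm_eq_zero.1 h), ← ha]

lemma norm_add_normalize_lt_or_norm_sub_normalize_lt (hu : ‖u‖ = 1) (hd : 0 < d)
    (ha : ∀ c : ℝ, a ≠ c • u) :
    ‖u + normalize a‖ < ‖u + normalize (a + d • u)‖ ∨
      ‖u - normalize (a + d • u)‖ < ‖u - normalize a‖ := by
  have ha₀ : a ≠ 0 := by simpa using ha 0
  have hb₀ : a + d • u ≠ 0 := fun h => ha (-d) (by rw [neg_smul, eq_neg_iff_add_eq_zero, h])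
  set b := a + d • u with hb
  set p := ‖u + normalize a‖
  set q := ‖u - normalize a‖
  by_contra! hcon
  have hp : ‖u + normalize b‖ = p := le_antisymm hcon.1
    (norm_add_normalize_le_norm_add_normalize_add_smul hu hd.le ha₀ hb₀)
  have hq : ‖u - normalize b‖ = q := le_antisymm
    (norm_sub_normalize_add_smul_le_norm_sub_normalize hu hd.le ha₀ hb₀) hcon.2
  have hdp : d * p = d + ‖b‖ - ‖a‖ :=
    hp ▸ mul_norm_add_normalize_add_smul_eq hu hd.le ha₀ hb₀ hcon.1
  have hdq : d * q = d + ‖a‖ - ‖b‖ := mul_norm_sub_normalize_eq hu hd.le ha₀ hb₀ hcon.2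
  have hsum : p + q ≤ 2 := (mul_left_cancel₀ hd.ne' (by linear_combination hdp + hdq)).le
  obtain ⟨g, hg, hgu⟩ := exists_dual_vector'' ℝ u
  rw [hu, RCLike.ofReal_real_eq_id, id] at hgu
  have hga := dual_apply_eq_norm_add_sub_one hg hgu hsum
  have hgb := dual_apply_eq_norm_add_sub_one hg hgu (v := normalize b) (hp ▸ hq ▸ hsum)
  have hgba : ‖b‖ * (p - 1) = ‖a‖ * (p - 1) + d := by
    have : g b = g a + d := by rw [hb, map_add, map_smul, hgu, smul_eq_mul, mul_one]
    rwa [dual_apply_eq_norm_mul_dual_apply_normalize g a,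
      dual_apply_eq_norm_mul_dual_apply_normalize g b, hga, hgb, hp] at this
  have hpq : d ^ 2 * (p * q) = 0 := by
    linear_combination (d * q + ‖b‖ - ‖a‖) * hdp + (d + ‖b‖ - ‖a‖) * hdq - d * hgba
  obtain ⟨c, hc⟩ := exists_eq_smul_of_norm_add_normalize_mul_norm_sub_normalize_eq_zero
    (by simpa [hd.ne'] using hpq)
  exact ha c hc

end UnitDirection

lemma thyCos_lt_thyCos_add_smul {x a : X} {d : ℝ} (hx : x ≠ 0) (hd : 0 < d)
    (ha : ∀ c : ℝ, a ≠ c • x) : thyCos x a < thyCos x (a + d • x) := by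
  set u : X := normalize x
  have hu : ‖u‖ = 1 := norm_normalize hx
  have hxu : x = ‖x‖ • u := (norm_smul_normalize x).symm
  have hau : ∀ c : ℝ, a ≠ c • u := fun c h => ha (c / ‖x‖) <| by
    rw [h, div_eq_mul_inv, mul_smul]; rfl
  have hb : a + d • x = a + (d * ‖x‖) • u := by rw [mul_smul, ← hxu]
  have hd' : 0 < d * ‖x‖ := mul_pos hd (norm_pos_iff.2 hx)
  have ha₀ : a ≠ 0 := by simpa using ha 0
  have hb₀ : a + (d * ‖x‖) • u ≠ 0 := hb ▸ fun h => ha (-d) <| by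
    rw [neg_smul, eq_neg_iff_add_eq_zero, h]
  have hp := norm_add_normalize_le_norm_add_normalize_add_smul hu hd'.le ha₀ hb₀
  have hq := norm_sub_normalize_add_smul_le_norm_sub_normalize hu hd'.le ha₀ hb₀
  have hlt := norm_add_normalize_lt_or_norm_sub_normalize_lt (d := d * ‖x‖) hu hd' hau
  rw [← hb] at hp hq hlt
  unfold thyCos
  rcases hlt with h | h <;> nlinarith [norm_nonneg (u + normalize a),
    norm_nonneg (u - normalize (a + d • x))]

lemma continuousAt_normalize {v : X} (hv : v ≠ 0) : ContinuousAt (normalize : X → X) v :=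
  (continuous_norm.continuousAt.inv₀ (norm_ne_zero_iff.2 hv)).smul continuousAt_id

lemma continuousAt_thyCos (u : X) {v : X} (hv : v ≠ 0) : ContinuousAt (thyCos u) v := by
  have hφ : Continuous fun w : X =>
      1 / 4 * (‖normalize u + w‖ ^ 2 - ‖normalize u - w‖ ^ 2) := by fun_prop
  exact hφ.continuousAt.comp (continuousAt_normalize hv)

lemma thyCos_smul_right_of_pos (u : X) {r : ℝ} (hr : 0 < r) (v : X) :
    thyCos u (r • v) = thyCos u v := by
  simp only [thyCos, normalize_smul_of_pos hr]

lemma thyCos_self {u : X} (hu : u ≠ 0) : thyCos u u = 1 := by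
  norm_num [thyCos, ← two_smul ℝ, norm_smul, norm_normalize hu]

lemma thyCos_neg_right_self {u : X} (hu : u ≠ 0) : thyCos u (-u) = -1 := by
  norm_num [thyCos, ← two_smul ℝ, norm_smul, norm_normalize hu]

lemma tendsto_thyCos_add_smul_atTop (u y : X) {v : X} (hv : v ≠ 0) :
    Tendsto (fun t : ℝ => thyCos u (y + t • v)) atTop (𝓝 (thyCos u v)) := by
  have hlim : Tendsto (fun t : ℝ => t⁻¹ • y + v) atTop (𝓝 v) := by
    simpa using ((tendsto_inv_atTop_zero (𝕜 := ℝ)).smul_const y).add_const v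
  refine ((continuousAt_thyCos u hv).tendsto.comp hlim).congr' ?_
  filter_upwards [eventually_gt_atTop 0] with t ht
  rw [Function.comp_apply, ← thyCos_smul_right_of_pos u ht, smul_add, smul_smul,
    mul_inv_cancel₀ ht.ne', one_smul, add_comm]

end ThyCos

lemma range_eq_Ioo_of_strictMono_of_tendsto {β : Type*} [LinearOrder β] [TopologicalSpace β]
    [OrderTopology β] {f : ℝ → β} {a b : β} (hf : StrictMono f) (hc : Continuous f)
    (ha : Tendsto f atBot (𝓝 a)) (hb : Tendsto f atTop (𝓝 b)) : range f = Ioo a b := by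
  ext c
  constructor
  · rintro ⟨t, rfl⟩
    exact ⟨(hf.monotone.le_of_tendsto ha (t - 1)).trans_lt (hf (sub_one_lt t)),
      (hf (lt_add_one t)).trans_le (hf.monotone.ge_of_tendsto hb (t + 1))⟩
  · rintro ⟨hac, hcb⟩
    exact mem_range_of_exists_le_of_exists_ge hc
      ((ha.eventually (gt_mem_nhds hac)).exists.imp fun _ => le_of_lt)
      ((hb.eventually (lt_mem_nhds hcb)).exists.imp fun _ => le_of_lt)

lemma arccos_image_Ioo : arccos '' Ioo (-1) 1 = Ioo 0 π := by
  ext θ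
  constructor
  · rintro ⟨c, hc, rfl⟩
    exact ⟨arccos_pos.2 hc.2, arccos_lt_pi.2 hc.1⟩
  · intro hθ
    exact ⟨cos θ, mapsTo_cos_Ioo hθ, arccos_cos hθ.1.le hθ.2.le⟩

theorem stmt_13 {X : Type*} [NormedAddCommGroup X] [NormedSpace ℝ X]
    (x y : X) (h : LinearIndependent ℝ ![x, y])
    (Θ : ℝ → ℝ)
    (hΘ : ∀ t, Θ t = Real.arccos ((1/4) *
      (‖(‖x‖)⁻¹ • x + (‖y + t • x‖)⁻¹ • (y + t • x)‖ ^ 2 -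
       ‖(‖x‖)⁻¹ • x - (‖y + t • x‖)⁻¹ • (y + t • x)‖ ^ 2))) :
    StrictAnti Θ ∧ Continuous Θ ∧ Set.range Θ = Set.Ioo 0 Real.pi := by
  have hx : x ≠ 0 := h.ne_zero 0
  have hyx : ∀ t c : ℝ, y + t • x ≠ c • x := fun t c hc => one_ne_zero <|
    (LinearIndependent.pair_iff.1 h (t - c) 1 (by rw [sub_smul, one_smul, ← hc]; abel)).2
  set G : ℝ → ℝ := fun t => thyCos x (y + t • x)
  have hΘG : Θ = arccos ∘ G := funext hΘ
  have hG_mono : StrictMono G := fun t₁ t₂ ht => by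
    simpa [G, add_assoc, ← add_smul] using
      thyCos_lt_thyCos_add_smul hx (sub_pos.2 ht) (hyx t₁)
  have hG_cont : Continuous G := continuous_iff_continuousAt.2 fun t =>
    (continuousAt_thyCos x (fun h0 => hyx t 0 (by rw [h0, zero_smul]))).comp
      (continuousAt_const.add (continuousAt_id.smul continuousAt_const))
  have hG_bot : Tendsto G atBot (𝓝 (-1)) := by
    rw [← thyCos_neg_right_self hx]
    refine ((tendsto_thyCos_add_smul_atTop x y (neg_ne_zero.2 hx)).comp
      tendsto_neg_atBot_atTop).congr fun t => ?_
    simp only [Function.comp_apply, smul_neg, neg_smul, neg_neg, G]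
  have hG_range := range_eq_Ioo_of_strictMono_of_tendsto hG_mono hG_cont hG_bot
    (thyCos_self hx ▸ tendsto_thyCos_add_smul_atTop x y hx)
  have hG_mem : ∀ t, G t ∈ Icc (-1) 1 := fun t => Ioo_subset_Icc_self (hG_range ▸ mem_range_self t)
  refine ⟨hΘG ▸ fun t₁ t₂ ht => strictAntiOn_arccos (hG_mem t₁) (hG_mem t₂) (hG_mono ht),
    hΘG ▸ continuous_arccos.comp hG_cont, ?_⟩
  rw [hΘG, range_comp, hG_range, arccos_image_Ioo]
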